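/- arXiv:1809.03930 — 6 statements merged into one kernel-verified Lean document; each statement's English description precedes it below -/
import Mathlib

section
/- Let C, D be real symmetric n×n matrices with eigenvalues c₁ ≥ ... ≥ cₙ and d₁ ≥ ... ≥ dₙ respectively. Then trace(CD) ≤ Σᵢ cᵢ dᵢ. -/
/-!
Write `C = U diag(c) Uᵀ`, `D = W diag(d) Wᵀ` and `V = Uᵀ W`. By cyclicity of the trace,
`tr(CD) = tr(diag(c) V diag(d) Vᵀ) = ∑ᵢⱼ Vᵢⱼ² cᵢ dⱼ`. Since `V` is orthogonal, `(Vᵢⱼ²)` is doubly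
stochastic, so by Birkhoff's theorem it is a convex combination of permutation matrices; for each
permutation `σ` the rearrangement inequality gives `∑ᵢ cᵢ d_{σ i} ≤ ∑ᵢ cᵢ dᵢ`, as `c` and `d` are
both antitone.
-/

open Matrix

namespace Matrix

variable {n R : Type*} [Fintype n]

lemma trace_diagonal_mul_mul_diagonal_mul_transpose [DecidableEq n] [CommSemiring R]
    (c d : n → R) (V : Matrix n n R) :
    (diagonal c * V * diagonal d * Vᵀ).trace = c ⬝ᵥ ((V ⊙ V) *ᵥ d) := by
  simp only [trace, diag_apply, mul_apply (M := diagonal c * V * diagonal d), mul_diagonal,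
    diagonal_mul, transpose_apply, dotProduct, mulVec, hadamard_apply, Finset.mul_sum]
  exact Finset.sum_congr rfl fun i _ => Finset.sum_congr rfl fun j _ => by ring

lemma hadamard_self_mem_doublyStochastic [DecidableEq n] [CommRing R] [LinearOrder R]
    [IsStrictOrderedRing R] {V : Matrix n n R} (hV : Vᵀ * V = 1) :
    V ⊙ V ∈ doublyStochastic R n := by
  have hV' : V * Vᵀ = 1 := mul_eq_one_comm.mp hV
  refine mem_doublyStochastic_iff_sum.mpr
    ⟨fun i j => mul_self_nonneg (V i j), fun i => ?_, fun j => ?_⟩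
  · simpa [mul_apply] using congr_fun₂ hV' i i
  · simpa [mul_apply] using congr_fun₂ hV j j

lemma dotProduct_mulVec_le_of_mem_doublyStochastic [DecidableEq n] [Field R] [LinearOrder R]
    [IsStrictOrderedRing R] {M : Matrix n n R} (hM : M ∈ doublyStochastic R n) {c d : n → R}
    (hcd : Monovary c d) : c ⬝ᵥ (M *ᵥ d) ≤ c ⬝ᵥ d := by
  obtain ⟨w, hw_nonneg, hw_sum, rfl⟩ := exists_eq_sum_perm_of_mem_doublyStochastic hM
  calc c ⬝ᵥ ((∑ σ, w σ • σ.permMatrix R) *ᵥ d) = ∑ σ, w σ * ∑ i, c i * d (σ i) := by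
        simp only [sum_mulVec, smul_mulVec, permMatrix_mulVec, dotProduct_sum, dotProduct_smul]
        rfl
    _ ≤ ∑ σ, w σ * c ⬝ᵥ d :=
        Finset.sum_le_sum fun σ _ =>
          mul_le_mul_of_nonneg_left hcd.sum_mul_comp_perm_le_sum_mul (hw_nonneg σ)
    _ = c ⬝ᵥ d := by rw [← Finset.sum_mul, hw_sum, one_mul]

end Matrix

theorem theobald_trace_inequality_general
    (n : ℕ) (C D U W : Matrix (Fin n) (Fin n) ℝ) (c d : Fin n → ℝ)
    (hU : Uᵀ * U = 1) (hW : Wᵀ * W = 1)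
    (hc : Antitone c) (hd : Antitone d)
    (hC : C = U * Matrix.diagonal c * Uᵀ)
    (hD : D = W * Matrix.diagonal d * Wᵀ) :
    (C * D).trace ≤ ∑ i : Fin n, c i * d i := by
  subst hC hD
  set V := Uᵀ * W
  have hV : Vᵀ * V = 1 :=
    calc Vᵀ * V = Wᵀ * (U * Uᵀ) * W := by
          simp only [V, transpose_mul, transpose_transpose, Matrix.mul_assoc]
      _ = 1 := by rw [mul_eq_one_comm.mp hU, Matrix.mul_one, hW]
  calc (U * diagonal c * Uᵀ * (W * diagonal d * Wᵀ)).trace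
      = (diagonal c * V * diagonal d * Vᵀ).trace := by
        simp only [V, transpose_mul, transpose_transpose, Matrix.mul_assoc]
        rw [trace_mul_comm U]
        simp only [Matrix.mul_assoc]
    _ = c ⬝ᵥ ((V ⊙ V) *ᵥ d) := trace_diagonal_mul_mul_diagonal_mul_transpose c d V
    _ ≤ c ⬝ᵥ d :=
        dotProduct_mulVec_le_of_mem_doublyStochastic (hadamard_self_mem_doublyStochastic hV)
          (hc.monovary hd)

/-- Theobald's trace inequality: for real symmetric matrices C, D
with eigenvalues c₁ ≥ ... ≥ cₙ and d₁ ≥ ... ≥ dₙ, trace(CD) ≤ Σᵢ cᵢ dᵢ. -/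
theorem theobald_trace_inequality
    (n : ℕ) (C D U W : Matrix (Fin n) (Fin n) ℝ) (c d : Fin n → ℝ)
    (hCsym : C.IsSymm) (hDsym : D.IsSymm)
    (hU : Uᵀ * U = 1) (hW : Wᵀ * W = 1)
    (hc : Antitone c) (hd : Antitone d)
    (hC : C = U * Matrix.diagonal c * Uᵀ)
    (hD : D = W * Matrix.diagonal d * Wᵀ) :
    (C * D).trace ≤ ∑ i : Fin n, c i * d i :=
  theobald_trace_inequality_general n C D U W c d hU hW hc hd hC hD
end

section
/- Let N, R ∈ ℝ^{m×m} be symmetric positive definite, H' ∈ ℝ^{m×l} of full column rank, S' = (H')ᵗ R⁻¹ H', G' = (H')ᵗ N⁻¹ H', and P the rank-r spectral projection of S'. Then trace(G' (S')⁻¹ P) ≤ Σ_{i=1}^r λᵢ(R^{1/2} N⁻¹ R^{1/2}), where λᵢ denotes the i-th largest eigenvalue. -/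
/-!
Whitening by `R^{1/2}` turns `S'` into the Gram matrix `KᵀK` of `K = R^{-1/2} H'` and `G'` into
`Kᵀ M K` with `M = R^{1/2} N⁻¹ R^{1/2}`, so that `trace (G' S'⁻¹ P) = trace (M W)` for
`W = K (KᵀK)⁻¹ P Kᵀ`. Since `P` is a rank-`r` orthogonal projection commuting with `KᵀK`, `W` is
again a rank-`r` orthogonal projection. In the eigenbasis of `M` the trace becomes `∑ μⱼ cⱼ`, where
the diagonal entries `cⱼ` of the conjugated projection lie in `[0, 1]` and sum to `r`; for
decreasing `μ` such a weighted sum is at most `μ₁ + ⋯ + μᵣ` (Ky Fan).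
-/

open Matrix

noncomputable def indDiag (l r : ℕ) : Matrix (Fin l) (Fin l) ℝ :=
  Matrix.diagonal (fun i => if (i : ℕ) < r then (1 : ℝ) else 0)

lemma Antitone.sum_mul_le_sum_first {m r : ℕ} {μ c : Fin m → ℝ} (hμ : Antitone μ)
    (hc : ∀ j, c j ∈ Set.Icc 0 1) (hsum : ∑ j, c j = r) :
    ∑ j, μ j * c j ≤ ∑ j : Fin m, if (j : ℕ) < r then μ j else 0 := by
  rcases Nat.eq_zero_or_pos m with rfl | hm
  · simp
  have hrm : r ≤ m := by
    have : ∑ j, c j ≤ ∑ _j : Fin m, (1 : ℝ) := Finset.sum_le_sum fun j _ => (hc j).2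
    simp only [hsum, Finset.sum_const, Finset.card_univ, Fintype.card_fin, nsmul_eq_mul,
      mul_one] at this
    exact_mod_cast this
  -- `t` separates the first `r` values of `μ` from the others
  set t := μ ⟨r - 1, by omega⟩
  have key : ∀ j : Fin m, μ j * c j ≤
      (if (j : ℕ) < r then μ j else 0) + t * (c j - if (j : ℕ) < r then 1 else 0) := by
    intro j
    obtain ⟨hc0, hc1⟩ := hc j
    split_ifs with hj
    · have : t ≤ μ j := hμ (Fin.mk_le_mk.mpr (by omega) : j ≤ _)
      nlinarith
    · have : μ j ≤ t := hμ (Fin.mk_le_mk.mpr (by omega) : _ ≤ j)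
      nlinarith
  have hcount : ∑ j : Fin m, (if (j : ℕ) < r then (1 : ℝ) else 0) = r := by
    rw [Finset.sum_boole, Fin.card_filter_val_lt, min_eq_right hrm]
  calc ∑ j, μ j * c j
      ≤ ∑ j : Fin m, ((if (j : ℕ) < r then μ j else 0)
          + t * (c j - if (j : ℕ) < r then 1 else 0)) := Finset.sum_le_sum fun j _ => key j
    _ = ∑ j : Fin m, if (j : ℕ) < r then μ j else 0 := by
      rw [Finset.sum_add_distrib, ← Finset.mul_sum, Finset.sum_sub_distrib, hsum, hcount,
        sub_self, mul_zero, add_zero]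

lemma isIdempotentElem_indDiag (l r : ℕ) : IsIdempotentElem (indDiag l r) := by
  rw [IsIdempotentElem, indDiag, diagonal_mul_diagonal]
  congr 1
  ext i
  split_ifs <;> norm_num

lemma trace_indDiag (l r : ℕ) : (indDiag l r).trace = min l r := by
  rw [indDiag, trace_diagonal, Finset.sum_boole, Fin.card_filter_val_lt, Nat.cast_min]

namespace Matrix

section OrthogonalConj

variable {n : Type*} [Fintype n]

lemma IsSymm.diag_mem_Icc_of_isIdempotentElem {Q : Matrix n n ℝ} (hQ : Q.IsSymm)
    (hQQ : IsIdempotentElem Q) (i : n) : Q i i ∈ Set.Icc 0 1 := by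
  have hsq : Q i i = ∑ k, Q i k ^ 2 := by
    conv_lhs => rw [← hQQ.eq, mul_apply]
    simp only [hQ.apply, sq]
  have : Q i i ^ 2 ≤ Q i i :=
    hsq ▸ Finset.single_le_sum (f := fun k => Q i k ^ 2) (fun k _ => sq_nonneg _)
      (Finset.mem_univ i)
  constructor <;> nlinarith

variable {α : Type*} [CommRing α]

lemma IsSymm.mul_mul_transpose {m : Type*} {A : Matrix n n α} (hA : A.IsSymm) (V : Matrix m n α) :
    (V * A * Vᵀ).IsSymm := by
  simp only [IsSymm, transpose_mul, transpose_transpose, hA.eq, Matrix.mul_assoc]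

variable [DecidableEq n] {V : Matrix n n α}

lemma mul_mul_transpose_mul_mul_mul_transpose (hV : Vᵀ * V = 1) (A B : Matrix n n α) :
    V * A * Vᵀ * (V * B * Vᵀ) = V * (A * B) * Vᵀ := by
  simp only [Matrix.mul_assoc]
  rw [← Matrix.mul_assoc Vᵀ V, hV, Matrix.one_mul]

lemma _root_.IsIdempotentElem.mul_mul_transpose (hV : Vᵀ * V = 1) {A : Matrix n n α}
    (hA : IsIdempotentElem A) : IsIdempotentElem (V * A * Vᵀ) := by
  rw [IsIdempotentElem, mul_mul_transpose_mul_mul_mul_transpose hV, hA.eq]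

lemma _root_.Commute.mul_mul_transpose (hV : Vᵀ * V = 1) {A B : Matrix n n α}
    (hAB : Commute A B) : Commute (V * A * Vᵀ) (V * B * Vᵀ) := by
  rw [Commute, SemiconjBy, mul_mul_transpose_mul_mul_mul_transpose hV,
    mul_mul_transpose_mul_mul_mul_transpose hV, hAB.eq]

lemma trace_mul_mul_transpose (hV : Vᵀ * V = 1) (A : Matrix n n α) :
    (V * A * Vᵀ).trace = A.trace := by
  rw [trace_mul_comm, ← Matrix.mul_assoc, hV, Matrix.one_mul]

end OrthogonalConj

theorem trace_mul_le_sum_first_of_isIdempotentElem {m r : ℕ} {U : Matrix (Fin m) (Fin m) ℝ}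
    {μ : Fin m → ℝ} (hU : Uᵀ * U = 1) (hμ : Antitone μ) {W : Matrix (Fin m) (Fin m) ℝ}
    (hW : W.IsSymm) (hWW : IsIdempotentElem W) (hWtr : W.trace = r) :
    (U * diagonal μ * Uᵀ * W).trace ≤ ∑ j : Fin m, if (j : ℕ) < r then μ j else 0 := by
  have hUt : Uᵀᵀ * Uᵀ = 1 := by rw [transpose_transpose]; exact mul_eq_one_comm.mp hU
  set Q := Uᵀ * W * Uᵀᵀ
  have htr : (U * diagonal μ * Uᵀ * W).trace = ∑ j, μ j * Q j j := by
    rw [Matrix.mul_assoc, Matrix.mul_assoc, trace_mul_comm]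
    simp only [trace, diag, Q, transpose_transpose, diagonal_mul, Matrix.mul_assoc]
  have hsum : ∑ j, Q j j = r := by
    rw [← hWtr, ← trace_mul_mul_transpose hUt W]
    rfl
  rw [htr]
  exact hμ.sum_mul_le_sum_first
    ((hW.mul_mul_transpose Uᵀ).diag_mem_Icc_of_isIdempotentElem (hWW.mul_mul_transpose hUt)) hsum

section GramProjection

variable {α : Type*} [CommRing α]

lemma _root_.Commute.nonsing_inv_right {n : Type*} [Fintype n] [DecidableEq n]
    {A B : Matrix n n α} (h : Commute A B) : Commute A B⁻¹ := by
  by_cases hB : IsUnit B.det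
  · calc A * B⁻¹ = B⁻¹ * (B * A) * B⁻¹ := by rw [nonsing_inv_mul_cancel_left _ _ hB]
      _ = B⁻¹ * A := by rw [← h.eq, Matrix.mul_assoc, Matrix.mul_assoc,
          mul_nonsing_inv _ hB, Matrix.mul_one]
  · rw [nonsing_inv_apply_not_isUnit _ hB]
    exact Commute.zero_right A

variable {m l : Type*} [Fintype m] [Fintype l] [DecidableEq l]

/-- When `P` is an orthogonal projection commuting with `KᵀK`, this is the orthogonal projection
onto `K (range P)`. -/
noncomputable def gramProj (K : Matrix m l α) (P : Matrix l l α) : Matrix m m α :=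
  K * (Kᵀ * K)⁻¹ * P * Kᵀ

variable {K : Matrix m l α} {P : Matrix l l α}

lemma isSymm_gramProj (hP : P.IsSymm) (hPK : Commute P (Kᵀ * K)) : (gramProj K P).IsSymm := by
  have hinv : ((Kᵀ * K)⁻¹)ᵀ = (Kᵀ * K)⁻¹ := by
    rw [transpose_nonsing_inv, transpose_mul, transpose_transpose]
  simp only [gramProj, IsSymm, transpose_mul, transpose_transpose, hP.eq, hinv, Matrix.mul_assoc,
    hPK.nonsing_inv_right.eq]

lemma isIdempotentElem_gramProj (hK : IsUnit (Kᵀ * K).det) (hP : IsIdempotentElem P) :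
    IsIdempotentElem (gramProj K P) := by
  simp only [IsIdempotentElem, gramProj, Matrix.mul_assoc]
  rw [← Matrix.mul_assoc Kᵀ K, mul_nonsing_inv_cancel_left _ _ hK, ← Matrix.mul_assoc P P, hP.eq]

lemma trace_mul_gramProj (M : Matrix m m α) :
    (M * gramProj K P).trace = (Kᵀ * M * K * (Kᵀ * K)⁻¹ * P).trace := by
  simp only [gramProj, ← Matrix.mul_assoc]
  rw [trace_mul_comm]
  simp only [← Matrix.mul_assoc]

lemma trace_gramProj (hK : IsUnit (Kᵀ * K).det) : (gramProj K P).trace = P.trace := by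
  rw [gramProj, trace_mul_comm, show Kᵀ * (K * (Kᵀ * K)⁻¹ * P) = Kᵀ * K * ((Kᵀ * K)⁻¹ * P) by
    simp only [Matrix.mul_assoc], mul_nonsing_inv_cancel_left _ _ hK]

end GramProjection

section Whitening

variable {α : Type*} [CommRing α] {m l : Type*} [Fintype m] [DecidableEq m] {T : Matrix m m α}

lemma transpose_mul_mul_eq_of_isSymm (hT : T.IsSymm) (hTu : IsUnit T.det) (H : Matrix m l α)
    (A : Matrix m m α) : Hᵀ * A * H = (T⁻¹ * H)ᵀ * (T * A * T) * (T⁻¹ * H) := by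
  rw [transpose_mul, transpose_nonsing_inv, hT.eq]
  simp only [Matrix.mul_assoc, nonsing_inv_mul_cancel_left _ _ hTu]
  rw [← Matrix.mul_assoc T, mul_nonsing_inv _ hTu, Matrix.one_mul]

lemma transpose_mul_inv_mul_eq_of_mul_self_eq (hT : T.IsSymm) (hTu : IsUnit T.det)
    {A : Matrix m m α} (hTA : T * T = A) (H : Matrix m l α) :
    Hᵀ * A⁻¹ * H = (T⁻¹ * H)ᵀ * (T⁻¹ * H) := by
  have hwhite : T * A⁻¹ * T = 1 := by
    simp only [← hTA, Matrix.mul_inv_rev, Matrix.mul_assoc, nonsing_inv_mul _ hTu,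
      mul_nonsing_inv _ hTu, Matrix.mul_one]
  rw [transpose_mul_mul_eq_of_isSymm hT hTu, hwhite, Matrix.mul_one]

end Whitening

lemma isUnit_det_of_rank_eq_card {n K : Type*} [Fintype n] [DecidableEq n] [Field K]
    {A : Matrix n n K} (h : A.rank = Fintype.card n) : IsUnit A.det := by
  rw [← isUnit_iff_isUnit_det, ← mulVec_surjective_iff_isUnit, ← coe_mulVecLin,
    ← LinearMap.range_eq_top]
  exact Submodule.eq_top_of_finrank_eq (by simpa [rank] using h)

end Matrix

theorem mai_rr_upper_bound_general
    (m l r : ℕ) (hrl : r ≤ l)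
    (N R : Matrix (Fin m) (Fin m) ℝ)
    (H' : Matrix (Fin m) (Fin l) ℝ) (hrank : H'.rank = l)
    (S' G' : Matrix (Fin l) (Fin l) ℝ)
    (hS' : S' = H'ᵀ * R⁻¹ * H') (hG' : G' = H'ᵀ * N⁻¹ * H')
    -- eigendecomposition of S'
    (V : Matrix (Fin l) (Fin l) ℝ) (d : Fin l → ℝ)
    (hV : Vᵀ * V = 1)
    (hSdec : S' = V * Matrix.diagonal d * Vᵀ)
    (P : Matrix (Fin l) (Fin l) ℝ) (hP : P = V * indDiag l r * Vᵀ)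
    -- positive definite square root of R and eigendecomposition of R^{1/2} N⁻¹ R^{1/2}
    (Rsqrt : Matrix (Fin m) (Fin m) ℝ)
    (hRsqrtsym : Rsqrt.IsSymm) (hRsqrtpd : Rsqrt.PosDef)
    (hRsqrt : Rsqrt * Rsqrt = R)
    (U : Matrix (Fin m) (Fin m) ℝ) (μ : Fin m → ℝ)
    (hU : Uᵀ * U = 1) (hμ : Antitone μ)
    (hMdec : Rsqrt * N⁻¹ * Rsqrt = U * Matrix.diagonal μ * Uᵀ) :
    (G' * S'⁻¹ * P).trace ≤ ∑ i : Fin m, (if (i : ℕ) < r then μ i else 0) := by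
  have hT : IsUnit Rsqrt.det := (isUnit_iff_isUnit_det _).mp hRsqrtpd.isUnit
  set K := Rsqrt⁻¹ * H'
  have hSK : S' = Kᵀ * K := hS' ▸ transpose_mul_inv_mul_eq_of_mul_self_eq hRsqrtsym hT hRsqrt H'
  have hGK : G' = Kᵀ * (U * diagonal μ * Uᵀ) * K := by
    rw [hG', transpose_mul_mul_eq_of_isSymm hRsqrtsym hT, hMdec]
  have hKK : IsUnit (Kᵀ * K).det := isUnit_det_of_rank_eq_card (by
    rw [rank_transpose_mul_self, rank_mul_eq_right_of_isUnit_det _ _ (isUnit_nonsing_inv_det _ hT),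
      hrank, Fintype.card_fin])
  have hPK : Commute P (Kᵀ * K) := by
    rw [hP, ← hSK, hSdec, indDiag]
    exact (commute_diagonal _ _).mul_mul_transpose hV
  have hPtr : P.trace = r := by
    rw [hP, trace_mul_mul_transpose hV, trace_indDiag, min_eq_right (by exact_mod_cast hrl)]
  have hPsymm : P.IsSymm := by
    rw [hP, indDiag]
    exact (isSymm_diagonal _).mul_mul_transpose V
  have hPidem : IsIdempotentElem P := hP ▸ (isIdempotentElem_indDiag l r).mul_mul_transpose hV
  rw [hGK, hSK, ← trace_mul_gramProj]
  exact trace_mul_le_sum_first_of_isIdempotentElem hU hμ (isSymm_gramProj hPsymm hPK)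
    (isIdempotentElem_gramProj hKK hPidem) (by rw [trace_gramProj hKK, hPtr])

/-- Lemma 1: trace(G' (S')⁻¹ P) ≤ Σ_{i=1}^r λᵢ(R^{1/2} N⁻¹ R^{1/2}). -/
theorem mai_rr_upper_bound
    (m l r : ℕ) (hlm : l < m) (hr1 : 1 ≤ r) (hrl : r ≤ l)
    (N R : Matrix (Fin m) (Fin m) ℝ)
    (hNsym : N.IsSymm) (hNpd : N.PosDef)
    (hRsym : R.IsSymm) (hRpd : R.PosDef)
    (H' : Matrix (Fin m) (Fin l) ℝ) (hrank : H'.rank = l)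
    (S' G' : Matrix (Fin l) (Fin l) ℝ)
    (hS' : S' = H'ᵀ * R⁻¹ * H') (hG' : G' = H'ᵀ * N⁻¹ * H')
    -- eigendecomposition of S'
    (V : Matrix (Fin l) (Fin l) ℝ) (d : Fin l → ℝ)
    (hV : Vᵀ * V = 1) (hd : Antitone d)
    (hSdec : S' = V * Matrix.diagonal d * Vᵀ)
    (P : Matrix (Fin l) (Fin l) ℝ) (hP : P = V * indDiag l r * Vᵀ)
    -- positive definite square root of R and eigendecomposition of R^{1/2} N⁻¹ R^{1/2}
    (Rsqrt : Matrix (Fin m) (Fin m) ℝ)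
    (hRsqrtsym : Rsqrt.IsSymm) (hRsqrtpd : Rsqrt.PosDef)
    (hRsqrt : Rsqrt * Rsqrt = R)
    (U : Matrix (Fin m) (Fin m) ℝ) (μ : Fin m → ℝ)
    (hU : Uᵀ * U = 1) (hμ : Antitone μ)
    (hMdec : Rsqrt * N⁻¹ * Rsqrt = U * Matrix.diagonal μ * Uᵀ) :
    (G' * S'⁻¹ * P).trace ≤ ∑ i : Fin m, (if (i : ℕ) < r then μ i else 0) :=
  mai_rr_upper_bound_general m l r hrl N R H' hrank S' G' hS' hG' V d hV hSdec P hP Rsqrt hRsqrtsym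
    hRsqrtpd hRsqrt U μ hU hμ hMdec
end

section
/- Let N ∈ ℝ^{m×m} be symmetric positive definite, H₀' ∈ ℝ^{m×l₀} of full column rank with l₀ < m, and R = H₀'(H₀')ᵗ + N. Then for each 1 ≤ i ≤ l₀, λᵢ(R N⁻¹) = λᵢ(G₀') + 1, where G₀' = (H₀')ᵗ N⁻¹ H₀' and λᵢ denotes the i-th largest eigenvalue. -/
/-!
Write `R N⁻¹ = H₀' B + 1` with `B = (H₀')ᵗ N⁻¹`, so that `B H₀' = G₀'`. Since `AB` and `BA` have the
same characteristic polynomial up to a power of `X`, the characteristic polynomial of `R N⁻¹` is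
`(X - 1)^(m - l₀) ∏ᵢ (X - (γᵢ + 1))`; both diagonalisations read off their roots, so the multiset
of eigenvalues of `R N⁻¹` consists of the `γᵢ + 1` together with `m - l₀` copies of `1`. As
`G₀'` is positive semidefinite, every `γᵢ + 1 ≥ 1`, so listing these values in non-increasing order
puts the `γᵢ + 1` first.
-/

open Matrix Polynomial Finset

namespace Matrix

variable {m n R : Type*} [Fintype m] [Fintype n] [DecidableEq m] [DecidableEq n] [CommRing R]

theorem charpoly_eq_prod_of_eq_mul_diagonal_mul_inv {A P : Matrix n n R} {d : n → R}
    (hP : IsUnit P.det) (hA : A = P * diagonal d * P⁻¹) :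
    A.charpoly = ∏ i, (X - C (d i)) := by
  obtain ⟨u, rfl⟩ := (isUnit_iff_isUnit_det _).mpr hP
  rw [hA, charpoly_units_conj, charpoly_diagonal]

theorem charpoly_mul_add_one (A : Matrix m n R) (B : Matrix n m R)
    (hle : Fintype.card n ≤ Fintype.card m) :
    (A * B + 1).charpoly =
      (X ^ (Fintype.card m - Fintype.card n) * (B * A).charpoly).comp (X - C 1) := by
  have hshift : A * B + 1 = A * B - scalar m (-1 : R) := by simp [sub_eq_add_neg]
  rw [hshift, charpoly_sub_scalar, charpoly_mul_comm_of_le _ _ hle, map_neg, ← sub_eq_add_neg]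

theorem PosSemidef.nonneg_of_eq_mul_diagonal_mul_transpose {G W : Matrix n n ℝ} {γ : n → ℝ}
    (hG : G.PosSemidef) (hW : Wᵀ * W = 1) (hdec : G = W * diagonal γ * Wᵀ) : 0 ≤ γ := by
  have hdiag : Wᵀ * G * W = diagonal γ := by
    rw [hdec]
    simp only [Matrix.mul_assoc, hW, ← Matrix.mul_assoc Wᵀ W, Matrix.one_mul, Matrix.mul_one]
  have hconj := hG.conjTranspose_mul_mul_same W
  rwa [conjTranspose_eq_transpose_of_trivial, hdiag, posSemidef_diagonal_iff] at hconj

end Matrix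

theorem Polynomial.map_univ_eq_add_replicate_of_prod_X_sub_C_eq {R ι κ : Type*} [CommRing R]
    [IsDomain R] [Fintype ι] [Fintype κ] {f : ι → R} {g : κ → R} {c : R} {k : ℕ}
    (h : ∏ i, (X - C (f i)) = (X - C c) ^ k * ∏ j, (X - C (g j))) :
    univ.val.map f = univ.val.map g + Multiset.replicate k c := by
  have hf : ∏ i, (X - C (f i)) = ((univ.val.map f).map (X - C ·)).prod := by
    rw [Finset.prod_eq_multiset_prod, Multiset.map_map]; rfl
  have hg : ∏ j, (X - C (g j)) = ((univ.val.map g).map (X - C ·)).prod := by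
    rw [Finset.prod_eq_multiset_prod, Multiset.map_map]; rfl
  rw [hf, hg, ← Multiset.prod_replicate, ← Multiset.map_replicate (X - C ·),
    ← Multiset.prod_add, ← Multiset.map_add] at h
  have hroots := congrArg roots h
  rwa [roots_multiset_prod_X_sub_C, roots_multiset_prod_X_sub_C, add_comm] at hroots

theorem Antitone.apply_castLE_eq_of_map_univ_eq {α : Type*} [LinearOrder α] {m l : ℕ}
    {f : Fin m → α} {g : Fin l → α} {c : α} (hf : Antitone f) (hg : Antitone g)
    (hc : ∀ i, c ≤ g i)
    (hfg : univ.val.map f = univ.val.map g + Multiset.replicate (m - l) c) (hlm : l ≤ m)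
    (i : Fin l) : f (Fin.castLE hlm i) = g i := by
  have hsorted : (List.ofFn g ++ List.replicate (m - l) c).SortedGE := by
    refine List.Pairwise.sortedGE (List.pairwise_append.mpr
      ⟨hg.sortedGE_ofFn.pairwise, List.pairwise_replicate.mpr (Or.inr le_rfl), ?_⟩)
    simp only [List.mem_ofFn, List.mem_replicate]
    rintro _ ⟨j, rfl⟩ _ ⟨-, rfl⟩
    exact hc j
  have hlist : List.ofFn f = List.ofFn g ++ List.replicate (m - l) c := by
    refine List.Perm.eq_of_sortedGE hf.sortedGE_ofFn hsorted ?_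
    rw [← Multiset.coe_eq_coe, ← Fin.univ_val_map, hfg, Fin.univ_val_map, ← Multiset.coe_add,
      Multiset.coe_replicate]
  have hi := List.getElem_of_eq hlist (by simpa using i.isLt.trans_le hlm)
  rwa [List.getElem_ofFn, List.getElem_append_left (by simp), List.getElem_ofFn] at hi

theorem eigenvalues_RNinv_shift_general
    (m l₀ : ℕ) (hml : l₀ < m)
    (N : Matrix (Fin m) (Fin m) ℝ) (hNpd : N.PosDef)
    (H₀' : Matrix (Fin m) (Fin l₀) ℝ)
    (R : Matrix (Fin m) (Fin m) ℝ) (hR : R = H₀' * H₀'ᵀ + N)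
    (G₀' : Matrix (Fin l₀) (Fin l₀) ℝ) (hG₀ : G₀' = H₀'ᵀ * N⁻¹ * H₀')
    -- eigenvalues of R N⁻¹ (similar to a symmetric matrix, so diagonalizable over ℝ)
    (Pm : Matrix (Fin m) (Fin m) ℝ) (hPm : IsUnit Pm.det)
    (μ : Fin m → ℝ) (hμ : Antitone μ)
    (hRN : R * N⁻¹ = Pm * Matrix.diagonal μ * Pm⁻¹)
    -- eigendecomposition of the symmetric matrix G₀'
    (W : Matrix (Fin l₀) (Fin l₀) ℝ) (γ : Fin l₀ → ℝ)
    (hW : Wᵀ * W = 1) (hγ : Antitone γ)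
    (hGdec : G₀' = W * Matrix.diagonal γ * Wᵀ) :
    ∀ i : Fin l₀, μ (Fin.castLE (le_of_lt hml) i) = γ i + 1 := by
  have hNdet : IsUnit N.det := (isUnit_iff_isUnit_det N).mp hNpd.isUnit
  have hRN' : R * N⁻¹ = H₀' * (H₀'ᵀ * N⁻¹) + 1 := by
    rw [hR, Matrix.add_mul, mul_nonsing_inv N hNdet, Matrix.mul_assoc]
  have hGdec' : H₀'ᵀ * N⁻¹ * H₀' = W * diagonal γ * W⁻¹ := by
    rw [← hG₀, hGdec, inv_eq_left_inv hW]
  have hcharpoly : ∏ j, (X - C (μ j)) = (X - C 1) ^ (m - l₀) * ∏ j, (X - C (γ j + 1)) := by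
    rw [← charpoly_eq_prod_of_eq_mul_diagonal_mul_inv hPm hRN, hRN',
      charpoly_mul_add_one _ _ (by simpa using hml.le),
      charpoly_eq_prod_of_eq_mul_diagonal_mul_inv (isUnit_det_of_left_inverse hW) hGdec']
    simp only [mul_comp, pow_comp, X_comp, Polynomial.prod_comp, sub_comp, C_comp, sub_sub, C_add,
      add_comm, Fintype.card_fin]
  have hγ₀ : 0 ≤ γ := by
    refine PosSemidef.nonneg_of_eq_mul_diagonal_mul_transpose ?_ hW hGdec
    simpa [hG₀] using hNpd.inv.posSemidef.conjTranspose_mul_mul_same H₀'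
  exact hμ.apply_castLE_eq_of_map_univ_eq (hγ.add_const 1)
    (fun j => le_add_of_nonneg_left (hγ₀ j))
    (map_univ_eq_add_replicate_of_prod_X_sub_C_eq hcharpoly) hml.le

/-- λᵢ(R N⁻¹) = λᵢ(G₀') + 1 for 1 ≤ i ≤ l₀, where
R = H₀'(H₀')ᵗ + N and G₀' = (H₀')ᵗ N⁻¹ H₀'. -/
theorem eigenvalues_RNinv_shift
    (m l₀ : ℕ) (hml : l₀ < m)
    (N : Matrix (Fin m) (Fin m) ℝ) (hNsym : N.IsSymm) (hNpd : N.PosDef)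
    (H₀' : Matrix (Fin m) (Fin l₀) ℝ) (hrank : H₀'.rank = l₀)
    (R : Matrix (Fin m) (Fin m) ℝ) (hR : R = H₀' * H₀'ᵀ + N)
    (G₀' : Matrix (Fin l₀) (Fin l₀) ℝ) (hG₀ : G₀' = H₀'ᵀ * N⁻¹ * H₀')
    -- eigenvalues of R N⁻¹ (similar to a symmetric matrix, so diagonalizable over ℝ)
    (Pm : Matrix (Fin m) (Fin m) ℝ) (hPm : IsUnit Pm.det)
    (μ : Fin m → ℝ) (hμ : Antitone μ)
    (hRN : R * N⁻¹ = Pm * Matrix.diagonal μ * Pm⁻¹)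
    -- eigendecomposition of the symmetric matrix G₀'
    (W : Matrix (Fin l₀) (Fin l₀) ℝ) (γ : Fin l₀ → ℝ)
    (hW : Wᵀ * W = 1) (hγ : Antitone γ)
    (hGdec : G₀' = W * Matrix.diagonal γ * Wᵀ) :
    ∀ i : Fin l₀, μ (Fin.castLE (le_of_lt hml) i) = γ i + 1 :=
  eigenvalues_RNinv_shift_general m l₀ hml N hNpd H₀' R hR G₀' hG₀ Pm hPm μ hμ hRN W γ hW hγ hGdec
end

section
/- Let S, G, T ∈ ℝ^{l×l} be symmetric positive definite with T ⪰ S G⁻¹ S (Loewner order). Then trace(S T⁻¹) ≤ trace(G S⁻¹). -/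
/-!
Both conditions `T ⪰ S G⁻¹ S` and `G ⪰ S T⁻¹ S` say that the block matrix `[[G, S], [S, T]]` is
positive semidefinite (its two Schur complements), so the hypothesis yields `G - S T⁻¹ S ⪰ 0`.
Then `tr(G S⁻¹) - tr(S T⁻¹) = tr((G - S T⁻¹ S) S⁻¹)` is the trace of a product of two positive
semidefinite matrices, hence nonnegative.
-/

open Matrix
open scoped ComplexOrder MatrixOrder

namespace Matrix

variable {m n 𝕜 : Type*} [Fintype m] [Fintype n] [RCLike 𝕜]

theorem PosSemidef.trace_mul_nonneg {A B : Matrix n n 𝕜} (hA : A.PosSemidef)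
    (hB : B.PosSemidef) : 0 ≤ (A * B).trace := by
  classical
  obtain ⟨R, rfl⟩ := CStarAlgebra.nonneg_iff_eq_star_mul_self.mp hB.nonneg
  rw [star_eq_conjTranspose, ← Matrix.mul_assoc, trace_mul_comm, ← Matrix.mul_assoc]
  exact (hA.mul_mul_conjTranspose_same R).trace_nonneg

theorem PosDef.posSemidef_sub_conjTranspose_mul_inv_mul_iff [DecidableEq m] [DecidableEq n]
    {A : Matrix m m 𝕜} {D : Matrix n n 𝕜} (B : Matrix m n 𝕜) (hA : A.PosDef) (hD : D.PosDef) :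
    (D - Bᴴ * A⁻¹ * B).PosSemidef ↔ (A - B * D⁻¹ * Bᴴ).PosSemidef := by
  have := hA.isUnit.invertible
  have := hD.isUnit.invertible
  exact (PosDef.fromBlocks₁₁ B D hA).symm.trans (PosDef.fromBlocks₂₂ A B hD)

end Matrix

theorem mpz_le_mai_general
    (l : ℕ)
    (S G T : Matrix (Fin l) (Fin l) ℝ)
    (hSpd : S.PosDef)
    (hGpd : G.PosDef)
    (hTpd : T.PosDef)
    (hLoewner : (T - S * G⁻¹ * S).PosSemidef) :
    (S * T⁻¹).trace ≤ (G * S⁻¹).trace := by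
  have hS : Sᴴ = S := hSpd.isHermitian
  have hSchur := (hGpd.posSemidef_sub_conjTranspose_mul_inv_mul_iff S hTpd).mp (by rwa [hS])
  rw [hS] at hSchur
  have hdiff : (G * S⁻¹).trace - (S * T⁻¹).trace = ((G - S * T⁻¹ * S) * S⁻¹).trace := by
    rw [Matrix.sub_mul, trace_sub,
      mul_nonsing_inv_cancel_right _ _ ((isUnit_iff_isUnit_det S).mp hSpd.isUnit)]
  linarith [hSchur.trace_mul_nonneg hSpd.inv.posSemidef]

/-- if T ⪰ S G⁻¹ S then trace(S T⁻¹) ≤ trace(G S⁻¹). -/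
theorem mpz_le_mai
    (l : ℕ)
    (S G T : Matrix (Fin l) (Fin l) ℝ)
    (hSsym : S.IsSymm) (hSpd : S.PosDef)
    (hGsym : G.IsSymm) (hGpd : G.PosDef)
    (hTsym : T.IsSymm) (hTpd : T.PosDef)
    (hLoewner : (T - S * G⁻¹ * S).PosSemidef) :
    (S * T⁻¹).trace ≤ (G * S⁻¹).trace :=
  mpz_le_mai_general l S G T hSpd hGpd hTpd hLoewner
end

section
/- Let S', T' ∈ ℝ^{l×l} be symmetric positive definite, P the rank-r spectral projection of S'. Then for each 1 ≤ i ≤ l, λᵢ(S'(T')⁻¹ P) ≤ λᵢ(S'(T')⁻¹), where λᵢ denotes the i-th largest eigenvalue. -/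
open Matrix

/-!
Write `T'⁻¹ = Bᴴ * B`. Since `P` commutes with `S'`, the matrices `S'T'⁻¹P` and `S'T'⁻¹` have the
characteristic polynomials of the Hermitian matrices `B(S'P)Bᴴ` and `BS'Bᴴ`, because
`charpoly (XY) = charpoly (YX)`. As `P` is a self-adjoint idempotent commuting with `S' ⪰ 0`,
`S' - S'P = (1 - P)S'(1 - P) ⪰ 0`, hence `B(S'P)Bᴴ ⪯ BS'Bᴴ`, and Weyl's monotonicity theorem
compares the sorted eigenvalues. Weyl's theorem is a dimension count: the span of the top `i + 1`
eigenvectors of the smaller operator meets the span of the bottom `n - i` eigenvectors of the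
larger one.
-/

open Module Polynomial
open scoped ComplexOrder

namespace OrthonormalBasis

variable {ι 𝕜 E : Type*} [Fintype ι] [RCLike 𝕜] [NormedAddCommGroup E] [InnerProductSpace 𝕜 E]

theorem finrank_span_image (b : OrthonormalBasis ι 𝕜 E) (s : Finset ι) :
    finrank 𝕜 (Submodule.span 𝕜 (b '' s)) = s.card := by
  rw [Set.image_eq_range, finrank_span_eq_card]
  · simp
  · exact b.orthonormal.linearIndependent.comp _ Subtype.val_injective

theorem norm_sq_eq_sum_norm_repr_sq (b : OrthonormalBasis ι 𝕜 E) (x : E) :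
    ‖x‖ ^ 2 = ∑ i, ‖b.repr x i‖ ^ 2 := by
  rw [← b.repr.norm_map, EuclideanSpace.norm_sq_eq]

theorem repr_apply_eq_zero_of_mem_span_image (b : OrthonormalBasis ι 𝕜 E) {s : Set ι} {x : E}
    (hx : x ∈ Submodule.span 𝕜 (b '' s)) {j : ι} (hj : j ∉ s) : b.repr x j = 0 := by
  rw [← b.coe_toBasis, b.toBasis.mem_span_image] at hx
  simpa using mt (@hx j) hj

end OrthonormalBasis

namespace LinearMap.IsSymmetric

variable {𝕜 E : Type*} [RCLike 𝕜] [NormedAddCommGroup E] [InnerProductSpace 𝕜 E]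
  [FiniteDimensional 𝕜 E] {T S : E →ₗ[𝕜] E} {n : ℕ}

theorem re_inner_apply_self_eq_sum (hT : T.IsSymmetric) (hn : finrank 𝕜 E = n) (x : E) :
    RCLike.re (inner 𝕜 (T x) x) =
      ∑ i, hT.eigenvalues hn i * ‖(hT.eigenvectorBasis hn).repr x i‖ ^ 2 := by
  rw [← (hT.eigenvectorBasis hn).repr.inner_map_map, PiLp.inner_apply, map_sum]
  refine Finset.sum_congr rfl fun i _ => ?_
  rw [eigenvectorBasis_apply_self_apply, ← smul_eq_mul, inner_smul_left, RCLike.conj_ofReal,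
    inner_self_eq_norm_sq_to_K]
  norm_cast

theorem eigenvalues_mul_norm_sq_le_re_inner (hT : T.IsSymmetric) (hn : finrank 𝕜 E = n)
    {i : Fin n} {x : E} (hx : x ∈ Submodule.span 𝕜 (hT.eigenvectorBasis hn '' Set.Iic i)) :
    hT.eigenvalues hn i * ‖x‖ ^ 2 ≤ RCLike.re (inner 𝕜 (T x) x) := by
  rw [(hT.eigenvectorBasis hn).norm_sq_eq_sum_norm_repr_sq, Finset.mul_sum,
    hT.re_inner_apply_self_eq_sum hn]
  refine Finset.sum_le_sum fun j _ => ?_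
  by_cases hj : j ≤ i
  · exact mul_le_mul_of_nonneg_right (hT.eigenvalues_antitone hn hj) (sq_nonneg _)
  · simp [(hT.eigenvectorBasis hn).repr_apply_eq_zero_of_mem_span_image hx hj]

theorem re_inner_le_eigenvalues_mul_norm_sq (hT : T.IsSymmetric) (hn : finrank 𝕜 E = n)
    {i : Fin n} {x : E} (hx : x ∈ Submodule.span 𝕜 (hT.eigenvectorBasis hn '' Set.Ici i)) :
    RCLike.re (inner 𝕜 (T x) x) ≤ hT.eigenvalues hn i * ‖x‖ ^ 2 := by
  rw [(hT.eigenvectorBasis hn).norm_sq_eq_sum_norm_repr_sq, Finset.mul_sum,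
    hT.re_inner_apply_self_eq_sum hn]
  refine Finset.sum_le_sum fun j _ => ?_
  by_cases hj : i ≤ j
  · exact mul_le_mul_of_nonneg_right (hT.eigenvalues_antitone hn hj) (sq_nonneg _)
  · simp [(hT.eigenvectorBasis hn).repr_apply_eq_zero_of_mem_span_image hx hj]

theorem eigenvalues_le_eigenvalues_of_isPositive_sub (hT : T.IsSymmetric) (hS : S.IsSymmetric)
    (hn : finrank 𝕜 E = n) (hTS : (S - T).IsPositive) (i : Fin n) :
    hT.eigenvalues hn i ≤ hS.eigenvalues hn i := by
  have hUW : ¬ Disjoint (Submodule.span 𝕜 (hT.eigenvectorBasis hn '' Set.Iic i))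
      (Submodule.span 𝕜 (hS.eigenvectorBasis hn '' Set.Ici i)) := fun h => by
    have := Submodule.finrank_add_finrank_le_of_disjoint h
    rw [← Finset.coe_Iic, ← Finset.coe_Ici, OrthonormalBasis.finrank_span_image,
      OrthonormalBasis.finrank_span_image, Fin.card_Iic, Fin.card_Ici] at this
    omega
  obtain ⟨x, hxU, hxW, hx0⟩ : ∃ x ∈ Submodule.span 𝕜 (hT.eigenvectorBasis hn '' Set.Iic i),
      x ∈ Submodule.span 𝕜 (hS.eigenvectorBasis hn '' Set.Ici i) ∧ x ≠ 0 := by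
    simpa [Submodule.disjoint_def] using hUW
  have hTS' : RCLike.re (inner 𝕜 (T x) x) ≤ RCLike.re (inner 𝕜 (S x) x) := by
    have := hTS.re_inner_nonneg_left x
    rw [sub_apply, inner_sub_left, map_sub] at this
    linarith
  refine le_of_mul_le_mul_right ?_ (by positivity : 0 < ‖x‖ ^ 2)
  calc hT.eigenvalues hn i * ‖x‖ ^ 2 ≤ RCLike.re (inner 𝕜 (T x) x) :=
        hT.eigenvalues_mul_norm_sq_le_re_inner hn hxU
    _ ≤ RCLike.re (inner 𝕜 (S x) x) := hTS'
    _ ≤ hS.eigenvalues hn i * ‖x‖ ^ 2 :=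
        hS.re_inner_le_eigenvalues_mul_norm_sq hn hxW

theorem eigenvalues_eq_of_charpoly_eq (hT : T.IsSymmetric) (hn : finrank 𝕜 E = n)
    {μ : Fin n → ℝ} (hμ : Antitone μ) (h : T.charpoly = ∏ i, (X - C (μ i : 𝕜))) :
    hT.eigenvalues hn = μ := by
  rw [← List.ofFn_inj, ← sort_roots_charpoly_eq_eigenvalues, h,
    roots_prod _ _ (by simp [Finset.prod_ne_zero_iff, X_sub_C_ne_zero])]
  simp only [roots_X_sub_C, Multiset.bind_singleton, Fin.univ_val_map, Multiset.map_coe,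
    List.map_ofFn, Function.comp_def, RCLike.ofReal_re, Multiset.coe_sort]
  apply List.mergeSort_of_pairwise
  simp_rw [decide_eq_true_eq, ← List.sortedGE_iff_pairwise]
  exact hμ.sortedGE_ofFn

end LinearMap.IsSymmetric

namespace Matrix

section SortedEigenvalues

variable {𝕜 : Type*} [RCLike 𝕜] {n : ℕ}

-- Phrased through the characteristic polynomial, so that it applies to non-Hermitian matrices.
def HasSortedEigenvalues (A : Matrix (Fin n) (Fin n) 𝕜) (μ : Fin n → ℝ) : Prop :=
  Antitone μ ∧ A.charpoly = ∏ i, (X - C (μ i : 𝕜))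

theorem hasSortedEigenvalues_of_eq_mul_diagonal_mul_inv {A P : Matrix (Fin n) (Fin n) 𝕜}
    {μ : Fin n → ℝ} (hP : IsUnit P.det) (hμ : Antitone μ)
    (hA : A = P * diagonal (fun i => (μ i : 𝕜)) * P⁻¹) : A.HasSortedEigenvalues μ := by
  refine ⟨hμ, ?_⟩
  rw [hA, charpoly_mul_comm, ← mul_assoc, nonsing_inv_mul _ hP, one_mul, charpoly_diagonal]

theorem HasSortedEigenvalues.of_charpoly_eq {A B : Matrix (Fin n) (Fin n) 𝕜} {μ : Fin n → ℝ}
    (hA : A.HasSortedEigenvalues μ) (hAB : A.charpoly = B.charpoly) :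
    B.HasSortedEigenvalues μ :=
  ⟨hA.1, hAB ▸ hA.2⟩

theorem charpoly_toEuclideanLin (A : Matrix (Fin n) (Fin n) 𝕜) :
    (toEuclideanLin A).charpoly = A.charpoly :=
  charpoly_toLin A (PiLp.basisFun 2 𝕜 (Fin n))

theorem HasSortedEigenvalues.le_of_posSemidef_sub {A B : Matrix (Fin n) (Fin n) 𝕜}
    {μ ν : Fin n → ℝ} (hA : A.HasSortedEigenvalues μ) (hB : B.HasSortedEigenvalues ν)
    (hBh : B.IsHermitian) (hAB : (B - A).PosSemidef) : μ ≤ ν := by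
  have hAh : A.IsHermitian := by simpa using hBh.sub hAB.isHermitian
  have hTA := isSymmetric_toEuclideanLin_iff.mpr hAh
  have hTB := isSymmetric_toEuclideanLin_iff.mpr hBh
  rw [← hTA.eigenvalues_eq_of_charpoly_eq finrank_euclideanSpace_fin hA.1
      ((charpoly_toEuclideanLin A).trans hA.2),
    ← hTB.eigenvalues_eq_of_charpoly_eq finrank_euclideanSpace_fin hB.1
      ((charpoly_toEuclideanLin B).trans hB.2)]
  exact hTA.eigenvalues_le_eigenvalues_of_isPositive_sub hTB _
    (by rwa [← map_sub, isPositive_toEuclideanLin_iff])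

end SortedEigenvalues

variable {𝕜 m : Type*} [RCLike 𝕜] [Fintype m] [DecidableEq m]

theorem charpoly_mul_conjTranspose_mul_self (A B : Matrix m m 𝕜) :
    (A * (Bᴴ * B)).charpoly = (B * A * Bᴴ).charpoly := by
  rw [← mul_assoc, charpoly_mul_comm, mul_assoc]

theorem PosSemidef.exists_eq_conjTranspose_mul_self {A : Matrix m m 𝕜} (hA : A.PosSemidef) :
    ∃ B : Matrix m m 𝕜, A = Bᴴ * B := by
  open MatrixOrder in exact CStarAlgebra.nonneg_iff_eq_star_mul_self.mp hA.nonneg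

theorem PosSemidef.sub_mul_of_commute {S P : Matrix m m 𝕜}
    (hS : S.PosSemidef) (hP : IsStarProjection P) (hPS : Commute P S) :
    (S - S * P).PosSemidef := by
  have hQ := hP.one_sub
  have : S - S * P = (1 - P)ᴴ * S * (1 - P) := by
    calc S - S * P = S * (1 - P) * (1 - P) := by
          rw [mul_assoc, hQ.isIdempotentElem.eq, mul_sub, mul_one]
      _ = (1 - P)ᴴ * S * (1 - P) := by
          rw [← ((Commute.one_left S).sub_left hPS).eq, ← star_eq_conjTranspose,
            hQ.isSelfAdjoint.star_eq]
  rw [this]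
  exact hS.conjTranspose_mul_mul_same _

theorem exists_starAlgEquiv_eq_mul_mul_transpose {V : Matrix m m ℝ} (hV : Vᵀ * V = 1) :
    ∃ φ : Matrix m m ℝ ≃⋆ₐ[ℝ] Matrix m m ℝ, ∀ X, V * X * Vᵀ = φ X := by
  have hVstar : star V = Vᵀ := by
    rw [star_eq_conjTranspose, conjTranspose_eq_transpose_of_trivial]
  refine ⟨Unitary.conjStarAlgAut ℝ _ ⟨V, ?_⟩, fun X => by simp [hVstar]⟩
  exact mem_unitaryGroup_iff'.mpr (by rw [hVstar, hV])

end Matrix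

theorem isStarProjection_indDiag (l r : ℕ) : IsStarProjection (indDiag l r) := by
  refine ⟨?_, isHermitian_diagonal _⟩
  rw [IsIdempotentElem, indDiag, diagonal_mul_diagonal]
  congr 1
  ext i
  split_ifs <;> simp

theorem mpz_rr_le_mpz_ext_eigenvalues_general
    (l r : ℕ)
    (S' T' V : Matrix (Fin l) (Fin l) ℝ) (d : Fin l → ℝ)
    (hSpd : S'.PosDef)
    (hTpd : T'.PosDef)
    (hV : Vᵀ * V = 1)
    (hSdec : S' = V * Matrix.diagonal d * Vᵀ)
    (P : Matrix (Fin l) (Fin l) ℝ) (hP : P = V * indDiag l r * Vᵀ)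
    -- eigenvalues of S'(T')⁻¹P
    (P₁ : Matrix (Fin l) (Fin l) ℝ) (hP₁ : IsUnit P₁.det)
    (μ : Fin l → ℝ) (hμ : Antitone μ)
    (hdec₁ : S' * T'⁻¹ * P = P₁ * Matrix.diagonal μ * P₁⁻¹)
    -- eigenvalues of S'(T')⁻¹
    (P₂ : Matrix (Fin l) (Fin l) ℝ) (hP₂ : IsUnit P₂.det)
    (ν : Fin l → ℝ) (hν : Antitone ν)
    (hdec₂ : S' * T'⁻¹ = P₂ * Matrix.diagonal ν * P₂⁻¹) :
    ∀ i : Fin l, μ i ≤ ν i := by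
  obtain ⟨φ, hφ⟩ := exists_starAlgEquiv_eq_mul_mul_transpose hV
  rw [hφ] at hSdec hP
  have hPS : Commute P S' := hP ▸ hSdec ▸ (commute_diagonal _ _).map φ
  have hPproj : IsStarProjection P := hP ▸ (isStarProjection_indDiag l r).map φ
  obtain ⟨B, hB⟩ := hTpd.inv.posSemidef.exists_eq_conjTranspose_mul_self
  have hμ' : (B * (S' * P) * Bᴴ).HasSortedEigenvalues μ :=
    (hasSortedEigenvalues_of_eq_mul_diagonal_mul_inv hP₁ hμ hdec₁).of_charpoly_eq (by
      rw [charpoly_mul_comm, ← mul_assoc, hPS.eq, hB, charpoly_mul_conjTranspose_mul_self])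
  have hν' : (B * S' * Bᴴ).HasSortedEigenvalues ν :=
    (hasSortedEigenvalues_of_eq_mul_diagonal_mul_inv hP₂ hν hdec₂).of_charpoly_eq (by
      rw [hB, charpoly_mul_conjTranspose_mul_self])
  have hle : (B * S' * Bᴴ - B * (S' * P) * Bᴴ).PosSemidef := by
    rw [← sub_mul, ← mul_sub]
    exact (hSpd.posSemidef.sub_mul_of_commute hPproj hPS).mul_mul_conjTranspose_same B
  exact hμ'.le_of_posSemidef_sub hν' (hSpd.posSemidef.mul_mul_conjTranspose_same B).isHermitian
    hle

/-- λᵢ(S'(T')⁻¹ P) ≤ λᵢ(S'(T')⁻¹) for all i, where P is the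
rank-r spectral projection of S'. -/
theorem mpz_rr_le_mpz_ext_eigenvalues
    (l r : ℕ) (hr1 : 1 ≤ r) (hrl : r ≤ l)
    (S' T' V : Matrix (Fin l) (Fin l) ℝ) (d : Fin l → ℝ)
    (hSsym : S'.IsSymm) (hSpd : S'.PosDef)
    (hTsym : T'.IsSymm) (hTpd : T'.PosDef)
    (hV : Vᵀ * V = 1) (hd : Antitone d)
    (hSdec : S' = V * Matrix.diagonal d * Vᵀ)
    (P : Matrix (Fin l) (Fin l) ℝ) (hP : P = V * indDiag l r * Vᵀ)
    -- eigenvalues of S'(T')⁻¹P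
    (P₁ : Matrix (Fin l) (Fin l) ℝ) (hP₁ : IsUnit P₁.det)
    (μ : Fin l → ℝ) (hμ : Antitone μ)
    (hdec₁ : S' * T'⁻¹ * P = P₁ * Matrix.diagonal μ * P₁⁻¹)
    -- eigenvalues of S'(T')⁻¹
    (P₂ : Matrix (Fin l) (Fin l) ℝ) (hP₂ : IsUnit P₂.det)
    (ν : Fin l → ℝ) (hν : Antitone ν)
    (hdec₂ : S' * T'⁻¹ = P₂ * Matrix.diagonal ν * P₂⁻¹) :
    ∀ i : Fin l, μ i ≤ ν i :=
  mpz_rr_le_mpz_ext_eigenvalues_general l r S' T' V d hSpd hTpd hV hSdec P hP P₁ hP₁ μ hμ hdec₁ P₂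
    hP₂ ν hν hdec₂
end

section
/- Let R ∈ ℝ^{m×m} be symmetric positive definite, H ∈ ℝ^{m×l} of full column rank (l ≤ m), and S = Hᵗ R⁻¹ H. Then W = S⁻¹ Hᵗ R⁻¹ is the unique minimizer of trace(X R Xᵗ) over all X ∈ ℝ^{l×m} satisfying X H = I_l. -/
/-!
Every feasible `X` is `W + D` with `D * H = 0`. Since `W * R = S⁻¹ * Hᴴ`, the cross term
`W * R * Dᴴ = S⁻¹ * (D * H)ᴴ` vanishes, so `tr (X R Xᴴ) = tr (W R Wᴴ) + tr (D R Dᴴ)`, and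
the last trace is positive unless `D = 0` because `R` is positive definite.
-/

open Matrix

namespace Matrix

variable {l m n K : Type*}

theorem mulVec_injective_of_rank_eq_card [Field K] [Fintype n] {A : Matrix m n K}
    (h : A.rank = Fintype.card n) : Function.Injective A.mulVec :=
  mulVec_injective_iff.2 <| linearIndependent_iff_card_eq_finrank_span.2 <| by
    rw [Set.finrank, ← rank_eq_finrank_span_cols, h]

variable [Fintype m] [CommRing K] [StarRing K]

theorem mul_mul_conjTranspose_apply_self (D : Matrix l m K) (R : Matrix m m K) (i : l) :
    (D * R * Dᴴ) i i = star (star (D i)) ⬝ᵥ (R *ᵥ star (D i)) := by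
  simp only [star_star, mul_apply, dotProduct, mulVec, conjTranspose_apply, Pi.star_apply,
    Finset.sum_mul, Finset.mul_sum, mul_assoc]
  exact Finset.sum_comm

theorem trace_add_mul_mul_conjTranspose_add [Fintype l] {R : Matrix m m K} (hR : R.IsHermitian)
    {W D : Matrix l m K} (h : W * R * Dᴴ = 0) :
    ((W + D) * R * (W + D)ᴴ).trace = (W * R * Wᴴ).trace + (D * R * Dᴴ).trace := by
  have h' : D * R * Wᴴ = 0 := by
    rw [← conjTranspose_conjTranspose (D * R * Wᴴ)]
    simp only [conjTranspose_mul, conjTranspose_conjTranspose, hR.eq, ← Matrix.mul_assoc, h,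
      conjTranspose_zero]
  rw [conjTranspose_add, Matrix.add_mul, Matrix.add_mul, Matrix.mul_add, Matrix.mul_add, h, h',
    add_zero, zero_add, trace_add]

theorem PosDef.trace_mul_mul_conjTranspose_pos [Fintype l] [PartialOrder K]
    [IsOrderedCancelAddMonoid K] {R : Matrix m m K} (hR : R.PosDef) {D : Matrix l m K}
    (hD : D ≠ 0) : 0 < (D * R * Dᴴ).trace := by
  obtain ⟨i, hi⟩ : ∃ i, D i ≠ 0 := by
    by_contra! h
    exact hD (funext h)
  refine Finset.sum_pos' (fun j _ => (hR.posSemidef.mul_mul_conjTranspose_same D).diag_nonneg)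
    ⟨i, Finset.mem_univ i, ?_⟩
  rw [diag_apply, mul_mul_conjTranspose_apply_self]
  exact hR.dotProduct_mulVec_pos (star_ne_zero.2 hi)

end Matrix

section LCMV

variable {l m K : Type*} [Fintype l] [Fintype m] [DecidableEq l] [DecidableEq m]
  [Field K] [StarRing K]

noncomputable def lcmvFilter (R : Matrix m m K) (H : Matrix m l K) : Matrix l m K :=
  (Hᴴ * R⁻¹ * H)⁻¹ * Hᴴ * R⁻¹

variable [PartialOrder K] {R : Matrix m m K} {H : Matrix m l K}

theorem lcmvFilter_mul_eq_one (hR : R.PosDef) (hH : Function.Injective H.mulVec) :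
    lcmvFilter R H * H = 1 := by
  rw [lcmvFilter, Matrix.mul_assoc, Matrix.mul_assoc, ← Matrix.mul_assoc Hᴴ,
    nonsing_inv_mul _ ((isUnit_iff_isUnit_det _).1 (hR.inv.conjTranspose_mul_mul_same hH).isUnit)]

theorem lcmvFilter_mul_mul_conjTranspose_eq_zero (hR : R.PosDef) {D : Matrix l m K}
    (hD : D * H = 0) : lcmvFilter R H * R * Dᴴ = 0 := by
  rw [lcmvFilter, nonsing_inv_mul_cancel_right _ _ ((isUnit_iff_isUnit_det _).1 hR.isUnit),
    Matrix.mul_assoc, ← conjTranspose_mul, hD, conjTranspose_zero, Matrix.mul_zero]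

theorem trace_mul_mul_conjTranspose_eq_lcmvFilter_add (hR : R.PosDef)
    (hH : Function.Injective H.mulVec) {X : Matrix l m K} (hX : X * H = 1) :
    (X * R * Xᴴ).trace = (lcmvFilter R H * R * (lcmvFilter R H)ᴴ).trace +
      ((X - lcmvFilter R H) * R * (X - lcmvFilter R H)ᴴ).trace := by
  have hD : (X - lcmvFilter R H) * H = 0 := by
    rw [Matrix.sub_mul, hX, lcmvFilter_mul_eq_one hR hH, sub_self]
  rw [← trace_add_mul_mul_conjTranspose_add hR.isHermitian
    (lcmvFilter_mul_mul_conjTranspose_eq_zero hR hD), add_sub_cancel]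

end LCMV

theorem lcmv_optimality_general
    (m l : ℕ)
    (R : Matrix (Fin m) (Fin m) ℝ) (hRpd : R.PosDef)
    (H : Matrix (Fin m) (Fin l) ℝ) (hrank : H.rank = l)
    (S : Matrix (Fin l) (Fin l) ℝ) (hS : S = Hᵀ * R⁻¹ * H)
    (W : Matrix (Fin l) (Fin m) ℝ) (hW : W = S⁻¹ * Hᵀ * R⁻¹) :
    W * H = 1 ∧
      ∀ X : Matrix (Fin l) (Fin m) ℝ, X * H = 1 →
        (W * R * Wᵀ).trace ≤ (X * R * Xᵀ).trace ∧
          (X ≠ W → (W * R * Wᵀ).trace < (X * R * Xᵀ).trace) := by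
  have hH := mulVec_injective_of_rank_eq_card (hrank.trans (Fintype.card_fin l).symm)
  obtain rfl : W = lcmvFilter R H := by
    rw [hW, hS, lcmvFilter, conjTranspose_eq_transpose_of_trivial]
  simp only [← conjTranspose_eq_transpose_of_trivial]
  refine ⟨lcmvFilter_mul_eq_one hRpd hH, fun X hX => ?_⟩
  rw [trace_mul_mul_conjTranspose_eq_lcmvFilter_add hRpd hH hX]
  have hnonneg := (hRpd.posSemidef.mul_mul_conjTranspose_same (X - lcmvFilter R H)).trace_nonneg
  exact ⟨by linarith, fun hXW => by
    linarith [hRpd.trace_mul_mul_conjTranspose_pos (sub_ne_zero.2 hXW)]⟩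

/-- LCMV optimality: W = S⁻¹ Hᵗ R⁻¹ is the unique minimizer of
trace(X R Xᵗ) over X with X H = I. -/
theorem lcmv_optimality
    (m l : ℕ) (hlm : l ≤ m)
    (R : Matrix (Fin m) (Fin m) ℝ) (hRsym : R.IsSymm) (hRpd : R.PosDef)
    (H : Matrix (Fin m) (Fin l) ℝ) (hrank : H.rank = l)
    (S : Matrix (Fin l) (Fin l) ℝ) (hS : S = Hᵀ * R⁻¹ * H)
    (W : Matrix (Fin l) (Fin m) ℝ) (hW : W = S⁻¹ * Hᵀ * R⁻¹) :
    W * H = 1 ∧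
      ∀ X : Matrix (Fin l) (Fin m) ℝ, X * H = 1 →
        (W * R * Wᵀ).trace ≤ (X * R * Xᵀ).trace ∧
          (X ≠ W → (W * R * Wᵀ).trace < (X * R * Xᵀ).trace) :=
  lcmv_optimality_general m l R hRpd H hrank S hS W hW
end
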